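/- Correlation bound with the entanglement spectrum: for any bipartite density matrix ρ_{AB} with ρ_A positive definite, and any operator O on H_A ⊗ H_B, |Tr(ρ_{AB} ((log ρ_A) ⊗ I_B) O)| ≤ 6 ‖O‖ log d_A, where d_A ≥ 2 is the dimension of H_A and ‖O‖ the operator norm. -/

import Mathlib

/-!
Write `ρ = BᴴB` and `L = log ρ_A ⊗ I`. Then `Tr(ρ L O) = Tr((L Bᴴ)ᴴ (O Bᴴ))` is a Hilbert–Schmidt
inner product, so by Cauchy–Schwarz and `‖O Bᴴ‖₂ ≤ ‖O‖ ‖Bᴴ‖₂ = ‖O‖` it is at most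
`‖O‖ (Tr ρ L²)^{1/2} = ‖O‖ (Σ pᵢ log² pᵢ)^{1/2}`, where `pᵢ` is the spectrum of `ρ_A`.
Eigenvalues `pᵢ ≥ d⁻⁴` have `log² pᵢ ≤ 16 log² d`, and the smaller ones have
`pᵢ log² pᵢ ≤ 16 √pᵢ ≤ 16 / d²`, whence `Σ pᵢ log² pᵢ ≤ 16 log² d + 16 / d ≤ 36 log² d`.
-/

noncomputable section
open Matrix Finset
open scoped ComplexOrder

/-- Matrix logarithm via the spectral decomposition (junk value `0` for
non-Hermitian input). -/
def matLog {n : Type*} [Fintype n] [DecidableEq n] (ρ : Matrix n n ℂ) :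
    Matrix n n ℂ :=
  if h : ρ.IsHermitian then
    (h.eigenvectorUnitary : Matrix n n ℂ) *
      Matrix.diagonal (fun i => (Real.log (h.eigenvalues i) : ℂ)) *
      star (h.eigenvectorUnitary : Matrix n n ℂ)
  else 0

/-- Trace norm `‖X‖₁ = Tr √(XᴴX)`. -/
def traceNorm {n : Type*} [Fintype n] [DecidableEq n] (X : Matrix n n ℂ) : ℝ :=
  ((((Matrix.posSemidef_conjTranspose_mul_self X).1.eigenvectorUnitary : Matrix n n ℂ) *
      Matrix.diagonal (((↑) : ℝ → ℂ) ∘ (√·) ∘ (Matrix.posSemidef_conjTranspose_mul_self X).1.eigenvalues) *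
      (star (Matrix.posSemidef_conjTranspose_mul_self X).1.eigenvectorUnitary : Matrix n n ℂ)).trace).re

/-- Operator (spectral) norm of a matrix. -/
def opNorm {n : Type*} [Fintype n] [DecidableEq n] (X : Matrix n n ℂ) : ℝ :=
  ‖Matrix.toEuclideanCLM (𝕜 := ℂ) X‖

/-- A density matrix: positive semidefinite with unit trace. -/
def IsDensityMatrix {n : Type*} [Fintype n] [DecidableEq n]
    (ρ : Matrix n n ℂ) : Prop :=
  ρ.PosSemidef ∧ ρ.trace = 1

variable {α β : Type*} [Fintype α] [Fintype β] [DecidableEq α] [DecidableEq β]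

/-- Partial trace over the second factor. -/
def ptrB (ρ : Matrix (α × β) (α × β) ℂ) : Matrix α α ℂ :=
  Matrix.of fun a a' => ∑ b : β, ρ (a, b) (a', b)

/-- Extension of an operator on `A` by the identity on `B`. -/
def extA (M : Matrix α α ℂ) : Matrix (α × β) (α × β) ℂ :=
  Matrix.of fun x y => M x.1 y.1 * (if x.2 = y.2 then 1 else 0)

/-- Extension of an operator on `B` by the identity on `A`. -/
def extB (M : Matrix β β ℂ) : Matrix (α × β) (α × β) ℂ :=
  Matrix.of fun x y => (if x.1 = y.1 then 1 else 0) * M x.2 y.2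

/-- The truncated tail `Δ_A^Λ` of the entanglement spectrum of `ρ_A`:
`-Σ_{p_i < 1/Λ} (log p_i) |i⟩⟨i|` in the eigenbasis of `ρ_A`. -/
def specTail (ρA : Matrix α α ℂ) (Λ : ℝ) : Matrix α α ℂ :=
  if h : ρA.IsHermitian then
    (h.eigenvectorUnitary : Matrix α α ℂ) *
      Matrix.diagonal (fun i =>
        if h.eigenvalues i < 1 / Λ then (-(Real.log (h.eigenvalues i)) : ℂ)
        else 0) *
      star (h.eigenvectorUnitary : Matrix α α ℂ)
  else 0

open Real WithLp

lemma mul_log_sq_le_sqrt {x : ℝ} (hx0 : 0 ≤ x) (hx1 : x ≤ 1) : x * log x ^ 2 ≤ 16 * √x := by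
  obtain ⟨t, ht0, rfl⟩ : ∃ t, 0 ≤ t ∧ x = t ^ 4 :=
    ⟨√√x, by positivity,
      by rw [show 4 = 2 * 2 by rfl, pow_mul, sq_sqrt (sqrt_nonneg x), sq_sqrt hx0]⟩
  have ht1 : t ≤ 1 := (pow_le_one_iff_of_nonneg ht0 (by norm_num)).mp hx1
  have hsqrt : √(t ^ 4) = t ^ 2 := by
    rw [show t ^ 4 = (t ^ 2) ^ 2 by ring, sqrt_sq (by positivity)]
  have hmul : (log t * t) ^ 2 ≤ 1 := by
    rcases ht0.eq_or_lt with rfl | htpos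
    · simp
    · exact (sq_le_one_iff_abs_le_one _).mpr (abs_log_mul_self_lt t htpos ht1).le
  rw [hsqrt, log_pow]
  push_cast
  nlinarith [sq_nonneg t]

lemma mul_log_sq_le {x d : ℝ} (hd : 1 ≤ d) (hx0 : 0 ≤ x) (hx1 : x ≤ 1) :
    x * log x ^ 2 ≤ 16 * log d ^ 2 * x + 16 / d ^ 2 := by
  have hd0 : 0 < d := by linarith
  rcases lt_or_ge x (d ^ 4)⁻¹ with hsmall | hlarge
  · have hsqrt : √x ≤ (d ^ 2)⁻¹ := by
      calc √x ≤ √((d ^ 4)⁻¹) := sqrt_le_sqrt hsmall.le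
        _ = (d ^ 2)⁻¹ := by
          rw [sqrt_inv, show d ^ 4 = (d ^ 2) ^ 2 by ring, sqrt_sq (by positivity)]
    calc x * log x ^ 2 ≤ 16 * √x := mul_log_sq_le_sqrt hx0 hx1
      _ ≤ 16 / d ^ 2 := by rw [div_eq_mul_inv]; gcongr
      _ ≤ _ := le_add_of_nonneg_left (by positivity)
  · have hxpos : 0 < x := lt_of_lt_of_le (by positivity) hlarge
    have hlow : -(4 * log d) ≤ log x := by
      have h := log_le_log (by positivity) hlarge
      rw [log_inv, log_pow] at h
      exact_mod_cast h
    have hhigh : log x ≤ 4 * log d :=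
      (log_nonpos hx0 hx1).trans (by have := log_nonneg hd; positivity)
    have hsq : log x ^ 2 ≤ 16 * log d ^ 2 := by nlinarith [sq_le_sq' hlow hhigh]
    calc x * log x ^ 2 ≤ x * (16 * log d ^ 2) := mul_le_mul_of_nonneg_left hsq hx0
      _ ≤ _ := by nlinarith [show 0 ≤ 16 / d ^ 2 by positivity]

lemma sum_mul_log_sq_le {ι : Type*} [Fintype ι] {p : ι → ℝ} (hp : ∀ i, 0 ≤ p i)
    (hsum : ∑ i, p i = 1) (hcard : 2 ≤ Fintype.card ι) :
    ∑ i, p i * log (p i) ^ 2 ≤ (6 * log (Fintype.card ι)) ^ 2 := by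
  set d : ℝ := (Fintype.card ι : ℝ) with hd_def
  have hd : 2 ≤ d := by rw [hd_def]; exact_mod_cast hcard
  have hp1 : ∀ i, p i ≤ 1 := fun i =>
    hsum ▸ single_le_sum (fun j _ => hp j) (mem_univ i)
  have hlog : 0.6931471803 < log d := log_two_gt_d9.trans_le (log_le_log two_pos hd)
  calc ∑ i, p i * log (p i) ^ 2 ≤ ∑ i, (16 * log d ^ 2 * p i + 16 / d ^ 2) :=
        sum_le_sum fun i _ => mul_log_sq_le (by linarith) (hp i) (hp1 i)
    _ = 16 * log d ^ 2 + 16 / d := by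
        rw [sum_add_distrib, ← mul_sum, hsum, sum_const, card_univ, nsmul_eq_mul, ← hd_def]
        field_simp
    _ ≤ (6 * log d) ^ 2 := by
        have : 16 / d ≤ 8 := by rw [div_le_iff₀ (by positivity)]; linarith
        nlinarith

section HilbertSchmidt

open scoped Matrix.Norms.Frobenius

variable {𝕜 m n : Type*} [RCLike 𝕜] [Fintype m] [Fintype n]

lemma frobenius_norm_sq_eq_sum_col (X : Matrix m n 𝕜) :
    ‖X‖ ^ 2 = ∑ j, ‖(toLp 2 (Xᵀ j) : EuclideanSpace 𝕜 m)‖ ^ 2 := by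
  rw [frobenius_norm_def, ← sqrt_eq_rpow, sq_sqrt (by positivity), sum_comm]
  simp only [EuclideanSpace.norm_sq_eq, transpose_apply, rpow_two]

lemma frobenius_norm_eq_norm_vec (X : Matrix m n 𝕜) :
    ‖X‖ = ‖(toLp 2 X.vec : EuclideanSpace 𝕜 (n × m))‖ := by
  rw [← sq_eq_sq₀ (norm_nonneg _) (norm_nonneg _), frobenius_norm_sq_eq_sum_col,
    EuclideanSpace.norm_sq_eq, Fintype.sum_prod_type]
  simp only [EuclideanSpace.norm_sq_eq, transpose_apply, vec]

lemma frobenius_norm_sq_eq_re_trace (X : Matrix m n 𝕜) :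
    ‖X‖ ^ 2 = RCLike.re (Xᴴ * X).trace := by
  rw [frobenius_norm_eq_norm_vec, ← star_vec_dotProduct_vec, @norm_sq_eq_re_inner 𝕜,
    EuclideanSpace.inner_eq_star_dotProduct, dotProduct_comm]

lemma norm_trace_conjTranspose_mul_le (X Y : Matrix m n 𝕜) :
    ‖(Xᴴ * Y).trace‖ ≤ ‖X‖ * ‖Y‖ := by
  rw [frobenius_norm_eq_norm_vec X, frobenius_norm_eq_norm_vec Y, ← star_vec_dotProduct_vec,
    dotProduct_comm]
  exact norm_inner_le_norm (𝕜 := 𝕜) (toLp 2 X.vec) (toLp 2 Y.vec)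

lemma frobenius_norm_mul_le_opNorm_mul [DecidableEq m] (A : Matrix m m ℂ) (B : Matrix m n ℂ) :
    ‖A * B‖ ≤ opNorm A * ‖B‖ := by
  have hcol : ∀ j, ‖(toLp 2 ((A * B)ᵀ j) : EuclideanSpace ℂ m)‖ ≤
      opNorm A * ‖(toLp 2 (Bᵀ j) : EuclideanSpace ℂ m)‖ := fun j => by
    have hAB : (A * B)ᵀ j = A *ᵥ Bᵀ j := by
      ext i; simp only [transpose_apply, mul_apply, mulVec, dotProduct]
    rw [hAB, ← toEuclideanCLM_toLp]
    exact (toEuclideanCLM (𝕜 := ℂ) A).le_opNorm _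
  have hA : 0 ≤ opNorm A := norm_nonneg _
  rw [← sq_le_sq₀ (norm_nonneg _) (by positivity), mul_pow,
    frobenius_norm_sq_eq_sum_col, frobenius_norm_sq_eq_sum_col, mul_sum]
  exact sum_le_sum fun j _ => by rw [← mul_pow]; exact pow_le_pow_left₀ (norm_nonneg _) (hcol j) 2

open scoped MatrixOrder in
lemma IsDensityMatrix.norm_trace_mul_mul_le [DecidableEq m] {ρ L : Matrix m m ℂ} (hρ : IsDensityMatrix ρ)
    (hL : L.IsHermitian) (O : Matrix m m ℂ) :
    ‖(ρ * L * O).trace‖ ≤ opNorm O * √(ρ * (L * L)).trace.re := by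
  obtain ⟨B, rfl⟩ := CStarAlgebra.nonneg_iff_eq_star_mul_self.mp hρ.1.nonneg
  rw [star_eq_conjTranspose] at hρ ⊢
  have htrace : (Bᴴ * B * L * O).trace = ((L * Bᴴ)ᴴ * (O * Bᴴ)).trace := by
    rw [conjTranspose_mul, conjTranspose_conjTranspose, hL.eq, mul_assoc, mul_assoc,
      trace_mul_comm]
    simp only [mul_assoc]
  have hB : ‖Bᴴ‖ = 1 := by
    rw [← sqrt_sq (norm_nonneg _), frobenius_norm_sq_eq_re_trace, conjTranspose_conjTranspose,
      trace_mul_comm, hρ.2, RCLike.one_re, sqrt_one]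
  have hLB : ‖L * Bᴴ‖ = √(Bᴴ * B * (L * L)).trace.re := by
    rw [← sqrt_sq (norm_nonneg _), frobenius_norm_sq_eq_re_trace, conjTranspose_mul,
      conjTranspose_conjTranspose, hL.eq, ← mul_assoc, trace_mul_comm]
    simp only [mul_assoc]
    rfl
  calc ‖(Bᴴ * B * L * O).trace‖ ≤ ‖L * Bᴴ‖ * ‖O * Bᴴ‖ :=
        htrace ▸ norm_trace_conjTranspose_mul_le _ _
    _ ≤ ‖L * Bᴴ‖ * (opNorm O * ‖Bᴴ‖) := by gcongr; exact frobenius_norm_mul_le_opNorm_mul _ _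
    _ = _ := by rw [hB, hLB]; ring

end HilbertSchmidt

section MatrixLog

variable {n : Type*} [Fintype n] [DecidableEq n] {A : Matrix n n ℂ}

lemma Matrix.IsHermitian.matLog_eq (hA : A.IsHermitian) :
    matLog A = (hA.eigenvectorUnitary : Matrix n n ℂ) *
      diagonal (fun i => (log (hA.eigenvalues i) : ℂ)) *
        star (hA.eigenvectorUnitary : Matrix n n ℂ) := by
  rw [matLog, dif_pos hA]

lemma isHermitian_matLog (hA : A.IsHermitian) : (matLog A).IsHermitian := by
  rw [hA.matLog_eq, star_eq_conjTranspose]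
  exact isHermitian_mul_mul_conjTranspose _ (isHermitian_diagonal_of_self_adjoint _
    (by ext i; simp))

lemma Matrix.IsHermitian.trace_mul_matLog_mul_matLog (hA : A.IsHermitian) :
    (A * (matLog A * matLog A)).trace =
      ((∑ i, hA.eigenvalues i * log (hA.eigenvalues i) ^ 2 : ℝ) : ℂ) := by
  rw [hA.matLog_eq]
  set U : Matrix n n ℂ := ↑hA.eigenvectorUnitary
  have hU : star U * U = 1 := Unitary.coe_star_mul_self _
  have hA' : A = U * diagonal (fun i => (hA.eigenvalues i : ℂ)) * star U := hA.spectral_theorem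
  nth_rewrite 1 [hA']
  have hU' : ∀ X, star U * (U * X) = X := fun X => by rw [← mul_assoc, hU, one_mul]
  simp only [mul_assoc, hU']
  rw [trace_mul_comm]
  simp only [mul_assoc, hU, mul_one, diagonal_mul_diagonal, trace_diagonal]
  push_cast
  exact sum_congr rfl fun i _ => by ring

end MatrixLog

omit [DecidableEq α] in
lemma extA_mul (M N : Matrix α α ℂ) :
    (extA (M * N) : Matrix (α × β) (α × β) ℂ) = extA M * extA N := by
  ext ⟨a, b⟩ ⟨a', b'⟩
  simp [extA, mul_apply, Fintype.sum_prod_type, mul_ite]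

omit [Fintype α] [Fintype β] [DecidableEq α] in
lemma extA_conjTranspose (M : Matrix α α ℂ) :
    (extA M : Matrix (α × β) (α × β) ℂ)ᴴ = extA Mᴴ := by
  ext ⟨a, b⟩ ⟨a', b'⟩
  simp [extA, conjTranspose_apply, apply_ite (starRingEnd ℂ), eq_comm]

omit [Fintype α] [Fintype β] [DecidableEq α] in
lemma isHermitian_extA {M : Matrix α α ℂ} (hM : M.IsHermitian) :
    (extA M : Matrix (α × β) (α × β) ℂ).IsHermitian := by
  rw [IsHermitian, extA_conjTranspose, hM.eq]

omit [DecidableEq α] [DecidableEq β] in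
lemma trace_ptrB (ρ : Matrix (α × β) (α × β) ℂ) : (ptrB ρ).trace = ρ.trace := by
  simp [ptrB, trace, Fintype.sum_prod_type]

omit [DecidableEq α] in
lemma trace_mul_extA (ρ : Matrix (α × β) (α × β) ℂ) (M : Matrix α α ℂ) :
    (ρ * extA M).trace = (ptrB ρ * M).trace := by
  simp only [trace, Matrix.diag, ptrB, extA, mul_apply, of_apply, Fintype.sum_prod_type, mul_ite,
    mul_one, mul_zero, sum_ite_eq', mem_univ, if_true, sum_mul]
  exact sum_congr rfl fun a _ => sum_comm

/-- correlation bound with the entanglement spectrum: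
`|Tr(ρ_{AB} ((log ρ_A) ⊗ I_B) O)| ≤ 6 ‖O‖ log d_A`. -/
theorem entanglement_spectrum_correlation_bound
    (ρ : Matrix (α × β) (α × β) ℂ) (hρ : IsDensityMatrix ρ)
    (hA : (ptrB ρ).PosDef) (hd : 2 ≤ Fintype.card α)
    (O : Matrix (α × β) (α × β) ℂ) :
    ‖(ρ * extA (matLog (ptrB ρ)) * O).trace‖ ≤
      6 * opNorm O * Real.log (Fintype.card α) := by
  have hρA := hA.isHermitian
  have hspec : ∑ i, hρA.eigenvalues i = 1 := by
    have h := hρA.trace_eq_sum_eigenvalues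
    rw [trace_ptrB, hρ.2, ← RCLike.ofReal_sum, RCLike.ofReal_eq_complex_ofReal] at h
    exact_mod_cast h.symm
  have hlog : 0 ≤ log (Fintype.card α) := log_nonneg (by exact_mod_cast one_le_two.trans hd)
  calc ‖(ρ * extA (matLog (ptrB ρ)) * O).trace‖
      ≤ opNorm O * √(ρ * (extA (matLog (ptrB ρ)) * extA (matLog (ptrB ρ)))).trace.re :=
        hρ.norm_trace_mul_mul_le (isHermitian_extA (isHermitian_matLog hρA)) O
    _ = opNorm O * √(∑ i, hρA.eigenvalues i * log (hρA.eigenvalues i) ^ 2) := by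
        rw [← extA_mul, trace_mul_extA, hρA.trace_mul_matLog_mul_matLog, Complex.ofReal_re]
    _ ≤ opNorm O * √((6 * log (Fintype.card α)) ^ 2) :=
        mul_le_mul_of_nonneg_left
          (sqrt_le_sqrt (sum_mul_log_sq_le hA.posSemidef.eigenvalues_nonneg hspec hd))
          (norm_nonneg _)
    _ = 6 * opNorm O * log (Fintype.card α) := by rw [sqrt_sq (by positivity)]; ring

end
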